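/- Let K be a field of characteristic zero, G ∈ K[[z]][t], and f ∈ K[[z]] with f'² = G(z, f) and f'(0) ≠ 0. Let s ≥ 2 be an integer and let f₁ ∈ K[[z]] satisfy f₁ ≡ f mod z^s. If f₂ ∈ K[[z]] has f₂(0) = 0 and satisfies 2·f₁'·f₂' − G_t(z, f₁)·f₂ ≡ G(z, f₁) − f₁'² mod z^{2s−2}, then f₁ + f₂ ≡ f mod z^{2s−1}. In other words, one Newton step for the equation f'² = G(z, f) passes from precision s to precision 2s−1. -/

import Mathlib

/-!
Put `e = f - f₁ ≡ 0 mod z^s`. Expanding `G(z, f₁ + e)` by Taylor's formula and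
`f'² = (f₁' + e')²`, `e` solves the linearized equation `2 f₁' e' - G_t(z, f₁) e = G(z, f₁) - f₁'²` up to
`q e² - e'²`, which vanishes mod `z^(2s-2)`. So `g = e - f₂` solves the homogeneous linearized
equation mod `z^(2s-2)` with `g(0) = 0`; since `f₁'(0) = f'(0) ≠ 0` and the characteristic is
zero, the coefficient of `z^(k+1)` in `g` is determined by the coefficient of `z^k` in that
equation, so `g ≡ 0 mod z^(2s-1)`.
-/

open PowerSeries

namespace PowerSeries

variable {R : Type*} [CommRing R]

theorem X_pow_dvd_derivative {n : ℕ} {φ : R⟦X⟧} (h : X ^ (n + 1) ∣ φ) :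
    X ^ n ∣ d⁄dX R φ := by
  rw [X_pow_dvd_iff] at h ⊢
  intro m hm
  rw [coeff_derivative, h (m + 1) (by omega), zero_mul]

theorem derivative_X_pow_succ_mul (n : ℕ) (φ : R⟦X⟧) :
    d⁄dX R (X ^ (n + 1) * φ) = X ^ n * (((n : R⟦X⟧) + 1) * φ + X * d⁄dX R φ) := by
  rw [Derivation.leibniz, Derivation.leibniz_pow, derivative_X, smul_eq_mul, nsmul_eq_mul,
    smul_eq_mul, Nat.add_sub_cancel]
  push_cast
  ring

/-- Writing `g = X^(n+1) φ`, the coefficient of `X^n` in `a g' - b g` is `(n+1) a(0) φ(0)`. -/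
theorem X_pow_succ_dvd_of_X_pow_dvd_mul_derivative_sub_mul [IsDomain R] [CharZero R]
    {a b g : R⟦X⟧} (ha : constantCoeff a ≠ 0) (hg : constantCoeff g = 0) {n : ℕ}
    (h : X ^ n ∣ a * d⁄dX R g - b * g) : X ^ (n + 1) ∣ g := by
  induction n with
  | zero => simpa [X_dvd_iff] using hg
  | succ n ih =>
    obtain ⟨φ, rfl⟩ := ih (dvd_trans (pow_dvd_pow X n.le_succ) h)
    have hsplit : a * d⁄dX R (X ^ (n + 1) * φ) - b * (X ^ (n + 1) * φ)
        = X ^ n * (((n : R⟦X⟧) + 1) * a * φ) + X ^ (n + 1) * (a * d⁄dX R φ - b * φ) := by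
      rw [derivative_X_pow_succ_mul]
      ring
    have hcoeff : coeff n (a * d⁄dX R (X ^ (n + 1) * φ) - b * (X ^ (n + 1) * φ)) = 0 :=
      X_pow_dvd_iff.1 h n n.lt_succ_self
    rw [hsplit, map_add, coeff_X_pow_mul', coeff_X_pow_mul', if_pos le_rfl, Nat.sub_self,
      if_neg (by omega), add_zero, coeff_zero_eq_constantCoeff, map_mul, map_mul] at hcoeff
    have hφ : constantCoeff φ = 0 := by
      simpa [ha, Nat.cast_add_one_ne_zero] using hcoeff
    rw [pow_succ _ (n + 1)]
    exact mul_dvd_mul_left _ (X_dvd_iff.2 hφ)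

/-- With `e = f - f₁`, the defect is `q e² - e'²`, where `q` is the Taylor remainder of `G`
at `f₁`. -/
theorem X_pow_dvd_linearized_residual (G : Polynomial R⟦X⟧) {f f₁ : R⟦X⟧} {n : ℕ}
    (hode : (d⁄dX R f) ^ 2 = G.eval f) (h : X ^ (n + 1) ∣ f - f₁) :
    X ^ (2 * n) ∣ 2 * d⁄dX R f₁ * d⁄dX R (f - f₁) - G.derivative.eval f₁ * (f - f₁)
      - (G.eval f₁ - (d⁄dX R f₁) ^ 2) := by
  obtain ⟨q, hq⟩ := Polynomial.binomExpansion G f₁ (f - f₁)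
  rw [add_sub_cancel, ← hode] at hq
  have hdefect : 2 * d⁄dX R f₁ * d⁄dX R (f - f₁) - G.derivative.eval f₁ * (f - f₁)
      - (G.eval f₁ - (d⁄dX R f₁) ^ 2) = q * (f - f₁) ^ 2 - (d⁄dX R (f - f₁)) ^ 2 := by
    rw [map_sub]
    linear_combination hq
  rw [hdefect, two_mul]
  refine dvd_sub (Dvd.dvd.mul_left ?_ q) ?_
  · have hsq := pow_dvd_pow_of_dvd h 2
    rw [← pow_mul] at hsq
    exact dvd_trans (pow_dvd_pow X (by omega)) hsq
  · rw [← two_mul, pow_mul']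
    exact pow_dvd_pow_of_dvd (X_pow_dvd_derivative h) 2

end PowerSeries

/-- Correctness of one Newton step for the equation `f'² = G(z, f)`: if
`f'² = G(z,f)`, `f'(0) ≠ 0`, `f₁ ≡ f mod z^s` with `s ≥ 2`, and `f₂` satisfies
`f₂(0) = 0` and the linearized equation
`2·f₁'·f₂' − G_t(z,f₁)·f₂ ≡ G(z,f₁) − f₁'² mod z^(2s-2)`, then
`f₁ + f₂ ≡ f mod z^(2s-1)`: the step passes from precision `s` to precision `2s-1`. -/
theorem newton_step_doubles_precision {K : Type*} [Field K] [CharZero K]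
    (G : Polynomial (PowerSeries K)) (f f₁ f₂ : PowerSeries K) (s : ℕ) (hs : 2 ≤ s)
    (hode : (d⁄dX K f) ^ 2 = Polynomial.eval f G)
    (hf1 : coeff 1 f ≠ 0)
    (h1 : ∀ j < s, coeff j f₁ = coeff j f)
    (h20 : constantCoeff f₂ = 0)
    (h2 : ∀ j < 2 * s - 2,
      coeff j (2 * d⁄dX K f₁ * d⁄dX K f₂ - Polynomial.eval f₁ (Polynomial.derivative G) * f₂)
        = coeff j (Polynomial.eval f₁ G - (d⁄dX K f₁) ^ 2)) :
    ∀ j < 2 * s - 1, coeff j (f₁ + f₂) = coeff j f := by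
  obtain ⟨n, rfl⟩ : ∃ n, s = n + 1 := ⟨s - 1, by omega⟩
  have he : X ^ (n + 1) ∣ f - f₁ :=
    X_pow_dvd_iff.2 fun j hj => by rw [map_sub, h1 j hj, sub_self]
  have hf₂ : X ^ (2 * n) ∣ 2 * d⁄dX K f₁ * d⁄dX K f₂ - G.derivative.eval f₁ * f₂
      - (G.eval f₁ - (d⁄dX K f₁) ^ 2) :=
    X_pow_dvd_iff.2 fun j hj => by rw [map_sub, h2 j (by omega), sub_self]
  have ha : constantCoeff (2 * d⁄dX K f₁) ≠ 0 := by
    rw [← coeff_zero_eq_constantCoeff_apply, show (2 : K⟦X⟧) = C 2 from rfl, coeff_C_mul,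
      coeff_derivative, h1 1 (by omega)]
    simpa using hf1
  have hg : constantCoeff (f - (f₁ + f₂)) = 0 := by
    rw [map_sub, map_add, h20, ← coeff_zero_eq_constantCoeff_apply f₁, h1 0 (by omega),
      coeff_zero_eq_constantCoeff_apply, add_zero, sub_self]
  have hdvd : X ^ (2 * n + 1) ∣ f - (f₁ + f₂) := by
    refine X_pow_succ_dvd_of_X_pow_dvd_mul_derivative_sub_mul ha hg
      (b := G.derivative.eval f₁) ?_
    convert dvd_sub (X_pow_dvd_linearized_residual G hode he) hf₂ using 1
    rw [map_sub, map_sub, map_add]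
    ring
  intro j hj
  rw [eq_comm, ← sub_eq_zero, ← map_sub]
  exact X_pow_dvd_iff.1 hdvd j (by omega)
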